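/- Define G : [0,1] × [0,1] → ℝ by G(t,s) = t(1−s) if t ≤ s and G(t,s) = s(1−t) if s ≤ t. Let f : [0,1] → ℝ be continuous with f ≥ 0, f not identically zero, set u₀(t) = ∫₀¹ G(t,s) f(s) ds, and assume the smallness condition 4·B·‖u₀‖_∞ < 1, where B = max_{t∈[0,1]} ∫₀¹ G(t,s) ds = 1/8. Then the boundary value problem −u″(t) = u(t)² + f(t) on [0,1] with u(0) = u(1) = 0 has at least two distinct nonnegative solutions u ∈ C²([0,1]). -/

import Mathlib

open Set intervalIntegral

/-- The Green's function of `−d²/dt²` on `(0,1)` with Dirichlet boundary conditions. -/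
noncomputable def greenG (t s : ℝ) : ℝ := if t ≤ s then t * (1 - s) else s * (1 - t)

/-- `u` is a `C²` solution on `[0,1]` of the BVP `−u″ = u² + f`, `u(0) = u(1) = 0`. -/
def IsBVPSolution (f u : ℝ → ℝ) : Prop :=
  ContinuousOn u (Icc 0 1) ∧
  ∃ u' u'' : ℝ → ℝ,
    (∀ t ∈ Icc (0 : ℝ) 1, HasDerivWithinAt u (u' t) (Icc 0 1) t) ∧
    (∀ t ∈ Icc (0 : ℝ) 1, HasDerivWithinAt u' (u'' t) (Icc 0 1) t) ∧
    ContinuousOn u'' (Icc 0 1) ∧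
    (∀ t ∈ Icc (0 : ℝ) 1, -u'' t = u t ^ 2 + f t) ∧
    u 0 = 0 ∧ u 1 = 0

open scoped unitInterval NNReal Nat

/-!
Shooting. Cut `u²` off to `min (max u 0) κ ^ 2`, which is globally Lipschitz. Then for every slope
`c` the initial value problem `-u'' = g u + f`, `u 0 = 0`, `u' 0 = c` has a solution `u_c` on
`[0, 1]`: the fixed point of a Volterra operator, an iterate of which is a contraction. `u_c`
depends continuously on `c`. Put `φ c = u_c 1`.

* `φ 0 ≤ 0`, because `u_0'' ≤ 0` and `u_0 0 = u_0' 0 = 0`.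
* `φ c > 0` for some `c ∈ [0, F + 9]`, where `F = max f`. Otherwise write `u_c` through the Green's
  function of `[0, T]`, where `T` is a zero of `u_c`. This gives `m ≤ m² / 8 + ‖u₀‖` for
  `m = max u_c`. Since `‖u₀‖ < 2`, `m` can never equal `4`, yet `m = 0` at `c = 0` and `m > 4` at
  `c = F + 9`.
* `φ κ < 0` once `κ` is large. If `φ c ≥ 0` then `u_c ≥ 0`. On `t ∈ [1/4, 3/4]` we have
  `G(t, s) ≥ s (1 - s) / 4`, and `u²` grows superlinearly, so `c` is bounded a priori.

So `φ` has zeros `c₁ < c₂ ≤ κ`. At these zeros `0 ≤ u_c ≤ c t ≤ κ`, so the cut-off is inactive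
and `u_c` solves the problem. The two solutions differ because `u_c' 0 = c`.
-/

/-- The Green's function of `-d²/dt²` on `[0, T]` with Dirichlet boundary conditions. -/
noncomputable def greenOn (T t s : ℝ) : ℝ := t * (T - s) / T - max (t - s) 0

lemma greenOn_one : greenOn 1 = greenG := by
  ext t s
  unfold greenOn greenG
  split_ifs with h
  · rw [max_eq_right (by linarith)]; ring
  · rw [max_eq_left (by linarith)]; ring

@[fun_prop]
lemma continuous_greenOn (T t : ℝ) : Continuous (greenOn T t) := by
  unfold greenOn; fun_prop

lemma greenOn_nonneg {T t s : ℝ} (ht : t ∈ Icc 0 T) (hs : s ∈ Icc 0 T) : 0 ≤ greenOn T t s := by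
  have hT : 0 ≤ T := ht.1.trans ht.2
  unfold greenOn
  rcases le_total t s with h | h
  · rw [max_eq_right (by linarith)]
    exact div_nonneg (mul_nonneg ht.1 (sub_nonneg.2 hs.2)) hT |>.trans_eq (sub_zero _).symm
  · rcases hT.eq_or_lt with rfl | hT
    · simp [le_antisymm ht.2 ht.1, le_antisymm hs.2 hs.1]
    rw [max_eq_left (by linarith), le_sub_iff_add_le, zero_add, le_div_iff₀ hT]
    nlinarith [mul_nonneg hs.1 (sub_nonneg.2 ht.2)]

lemma greenOn_mono {T T' t s : ℝ} (hT : 0 < T) (hTT' : T ≤ T') (ht : 0 ≤ t) (hs : 0 ≤ s) :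
    greenOn T t s ≤ greenOn T' t s := by
  have hT' : 0 < T' := hT.trans_le hTT'
  have key : ∀ T, 0 < T → greenOn T t s = t - t * s / T - max (t - s) 0 := fun T hT => by
    unfold greenOn; field_simp
  rw [key T hT, key T' hT']
  gcongr

lemma greenG_le (t : ℝ) {s : ℝ} (hs : s ∈ I) : greenG t s ≤ s * (1 - s) := by
  unfold greenG; split_ifs <;> nlinarith [hs.1, hs.2]

lemma le_greenG {t s : ℝ} (ht : t ∈ Icc (1 / 4 : ℝ) (3 / 4)) (hs : s ∈ I) :
    s * (1 - s) / 4 ≤ greenG t s := by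
  unfold greenG; split_ifs <;> nlinarith [ht.1, ht.2, hs.1, hs.2]

lemma integral_sub_left_self (t : ℝ) : ∫ s in 0..t, (t - s) = t ^ 2 / 2 := by
  simp [integral_comp_sub_left (fun x => x)]

lemma integral_max_sub_mul {h : ℝ → ℝ} (hh : Continuous h) {T t : ℝ} (ht : t ∈ Icc 0 T) :
    ∫ s in 0..T, max (t - s) 0 * h s = ∫ s in 0..t, (t - s) * h s := by
  rw [← integral_add_adjacent_intervals (Continuous.intervalIntegrable (by fun_prop) 0 t)
    (Continuous.intervalIntegrable (by fun_prop) t T)]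
  have hleft : ∫ s in 0..t, max (t - s) 0 * h s = ∫ s in 0..t, (t - s) * h s :=
    integral_congr fun s hs => by
      rw [uIcc_of_le ht.1] at hs
      simp only [max_eq_left (sub_nonneg.2 hs.2)]
  have hright : ∫ s in t..T, max (t - s) 0 * h s = 0 := by
    rw [← integral_zero]
    refine integral_congr fun s hs => ?_
    rw [uIcc_of_le ht.2] at hs
    simp [max_eq_right (sub_nonpos.2 hs.1)]
  rw [hleft, hright, add_zero]

/-- The solution of `-u'' = h`, `u 0 = 0`, `u' 0 = c`. -/
noncomputable def volterra (c : ℝ) (h : ℝ → ℝ) (t : ℝ) : ℝ := c * t - ∫ s in 0..t, (t - s) * h s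

section Volterra

variable {c : ℝ} {h : ℝ → ℝ}

@[simp] lemma volterra_zero : volterra c h 0 = 0 := by simp [volterra]

lemma volterra_one : volterra c h 1 = c - ∫ s in 0..1, (1 - s) * h s := by simp [volterra]

lemma volterra_le_mul {t : ℝ} (ht : 0 ≤ t) (hnn : ∀ s ∈ Icc 0 t, 0 ≤ h s) :
    volterra c h t ≤ c * t := by
  have : 0 ≤ ∫ s in 0..t, (t - s) * h s :=
    integral_nonneg ht fun s hs => mul_nonneg (sub_nonneg.2 hs.2) (hnn s hs)
  unfold volterra; linarith

variable (hh : Continuous h)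
include hh

lemma hasDerivAt_volterra (t : ℝ) : HasDerivAt (volterra c h) (c - ∫ s in 0..t, h s) t := by
  have hexpand : volterra c h = fun t => c * t - t * (∫ s in 0..t, h s) + ∫ s in 0..t, s * h s :=
    funext fun t => by
      rw [volterra, ← integral_const_mul, sub_add, ← integral_sub
        (Continuous.intervalIntegrable (by fun_prop) _ _)
        (Continuous.intervalIntegrable (by fun_prop) _ _)]
      congr 2; ext s; ring
  have h1 := (hh.integral_hasStrictDerivAt 0 t).hasDerivAt
  have h2 := ((by fun_prop : Continuous fun s => s * h s).integral_hasStrictDerivAt 0 t).hasDerivAt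
  rw [hexpand]
  exact ((((hasDerivAt_id' t).const_mul c).fun_sub ((hasDerivAt_id' t).fun_mul h1)).fun_add
    h2).congr_deriv (by ring)

lemma hasDerivAt_volterra_deriv (t : ℝ) :
    HasDerivAt (fun t => c - ∫ s in 0..t, h s) (-h t) t := by
  simpa using (hh.integral_hasStrictDerivAt 0 t).hasDerivAt.const_sub c

lemma continuous_volterra : Continuous (volterra c h) :=
  continuous_iff_continuousAt.2 fun t => (hasDerivAt_volterra hh t).continuousAt

lemma isBVPSolution_volterra {f : ℝ → ℝ} (heq : ∀ t ∈ I, h t = volterra c h t ^ 2 + f t)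
    (h1 : volterra c h 1 = 0) : IsBVPSolution f (volterra c h) :=
  ⟨(continuous_volterra hh).continuousOn, fun t => c - ∫ s in 0..t, h s, fun t => -h t,
    fun t _ => (hasDerivAt_volterra hh t).hasDerivWithinAt,
    fun t _ => (hasDerivAt_volterra_deriv hh t).hasDerivWithinAt, hh.neg.continuousOn,
    fun t ht => by rw [neg_neg, heq t ht], volterra_zero, h1⟩

lemma eq_of_eqOn_volterra {c' : ℝ} {h' : ℝ → ℝ} (hh' : Continuous h')
    (heq : EqOn (volterra c h) (volterra c' h') I) : c = c' := by
  have hd : ∀ {c h}, Continuous h → HasDerivWithinAt (volterra c h) c I 0 := fun hh => by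
    simpa using (hasDerivAt_volterra hh 0).hasDerivWithinAt
  exact (uniqueDiffOn_Icc zero_lt_one 0 unitInterval.zero_mem).eq_deriv _
    ((hd hh').congr_of_mem heq unitInterval.zero_mem) (hd hh) |>.symm

lemma volterra_eq_greenOn {T t : ℝ} (hT : 0 < T) (ht : t ∈ Icc 0 T) :
    volterra c h t = t / T * volterra c h T + ∫ s in 0..T, greenOn T t s * h s := by
  have hsplit : ∫ s in 0..T, greenOn T t s * h s
      = t / T * (∫ s in 0..T, (T - s) * h s) - ∫ s in 0..T, max (t - s) 0 * h s := by
    rw [← integral_const_mul, ← integral_sub (Continuous.intervalIntegrable (by fun_prop) _ _)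
      (Continuous.intervalIntegrable (by fun_prop) _ _)]
    congr 1; ext s; unfold greenOn; field_simp
  rw [hsplit, integral_max_sub_mul hh ht, volterra, volterra]
  field_simp
  ring

lemma volterra_eq_greenG {t : ℝ} (ht : t ∈ I) :
    volterra c h t = t * volterra c h 1 + ∫ s in 0..1, greenG t s * h s := by
  simpa [greenOn_one] using volterra_eq_greenOn hh one_pos ht

end Volterra

lemma integral_greenOn {T t : ℝ} (hT : 0 < T) (ht : t ∈ Icc 0 T) :
    ∫ s in 0..T, greenOn T t s = t * (T - t) / 2 := by
  have h := volterra_eq_greenOn (c := 0) (h := fun _ => 1) continuous_const hT ht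
  simp only [volterra, zero_mul, zero_sub, mul_one, integral_sub_left_self] at h
  field_simp at h ⊢
  linarith

section VolterraBounds

variable {c : ℝ} {h : ℝ → ℝ} (hh : Continuous h)
include hh

lemma volterra_nonneg (hnn : ∀ s ∈ I, 0 ≤ h s) (h1 : 0 ≤ volterra c h 1) {t : ℝ} (ht : t ∈ I) :
    0 ≤ volterra c h t := by
  rw [volterra_eq_greenG hh ht, ← greenOn_one]
  exact add_nonneg (mul_nonneg ht.1 h1) <| integral_nonneg zero_le_one fun s hs =>
    mul_nonneg (greenOn_nonneg ht hs) (hnn s hs)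

lemma integral_greenOn_mul_le {T t : ℝ} (hT : 0 < T) (hT1 : T ≤ 1) (ht : t ∈ Icc 0 T)
    (hnn : ∀ s ∈ I, 0 ≤ h s) :
    ∫ s in 0..T, greenOn T t s * h s ≤ ∫ s in 0..1, greenG t s * h s := by
  rw [← greenOn_one]
  calc ∫ s in 0..T, greenOn T t s * h s ≤ ∫ s in 0..T, greenOn 1 t s * h s := by
        refine integral_mono_on hT.le (Continuous.intervalIntegrable (by fun_prop) _ _)
          (Continuous.intervalIntegrable (by fun_prop) _ _) fun s hs => ?_
        exact mul_le_mul_of_nonneg_right (greenOn_mono hT hT1 ht.1 hs.1)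
          (hnn s ⟨hs.1, hs.2.trans hT1⟩)
    _ ≤ ∫ s in 0..1, greenOn 1 t s * h s := by
        refine integral_mono_interval le_rfl hT.le hT1 ?_
          (Continuous.intervalIntegrable (by fun_prop) _ _)
        refine (MeasureTheory.ae_restrict_iff' measurableSet_Ioc).2 (.of_forall fun s hs => ?_)
        exact mul_nonneg (greenOn_nonneg ⟨ht.1, ht.2.trans hT1⟩ (Ioc_subset_Icc_self hs))
          (hnn s (Ioc_subset_Icc_self hs))

lemma volterra_le_div_two_of_volterra_one_nonpos {q : ℝ → ℝ} (hq : Continuous q)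
    (hq0 : ∀ s ∈ I, 0 ≤ q s) {r μ : ℝ} (hμ0 : 0 ≤ μ)
    (hμ : ∀ t ∈ I, ∫ s in 0..1, greenG t s * q s ≤ μ)
    (hhq : ∀ s ∈ I, h s ≤ r ^ 2 + q s) (h1 : volterra c h 1 ≤ 0)
    {t : ℝ} (ht : t ∈ I) : volterra c h t ≤ r ^ 2 / 8 + μ := by
  rcases le_or_gt (volterra c h t) 0 with hneg | hpos
  · nlinarith [sq_nonneg r]
  obtain ⟨T, hT, hvT⟩ : ∃ T ∈ Icc t 1, volterra c h T = 0 :=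
    intermediate_value_Icc' ht.2 (continuous_volterra hh).continuousOn ⟨h1, hpos.le⟩
  have hT0 : 0 < T := (ht.1.lt_of_ne (by rintro rfl; simp at hpos)).trans_le hT.1
  have htT : t ∈ Icc 0 T := ⟨ht.1, hT.1⟩
  have hgq := integral_greenOn_mul_le hq hT0 hT.2 htT hq0
  have htT8 : t * (T - t) / 2 ≤ 1 / 8 := by nlinarith [hT.2, sq_nonneg (T - 2 * t)]
  calc volterra c h t = ∫ s in 0..T, greenOn T t s * h s := by
        rw [volterra_eq_greenOn hh hT0 htT, hvT, mul_zero, zero_add]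
    _ ≤ ∫ s in 0..T, (r ^ 2 * greenOn T t s + greenOn T t s * q s) := by
        refine integral_mono_on hT0.le (Continuous.intervalIntegrable (by fun_prop) _ _)
          (Continuous.intervalIntegrable (by fun_prop) _ _) fun s hs => ?_
        have := mul_le_mul_of_nonneg_left (hhq s ⟨hs.1, hs.2.trans hT.2⟩)
          (greenOn_nonneg htT hs)
        linarith
    _ = r ^ 2 * (t * (T - t) / 2) + ∫ s in 0..T, greenOn T t s * q s := by
        rw [integral_add (Continuous.intervalIntegrable (by fun_prop) _ _)
          (Continuous.intervalIntegrable (by fun_prop) _ _), integral_const_mul,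
          integral_greenOn hT0 htT]
    _ ≤ r ^ 2 / 8 + μ := by nlinarith [hμ t ht, sq_nonneg r]

lemma le_div_two_of_volterra_one_nonpos {M : ℝ} (hhM : ∀ s ∈ I, h s ≤ M) (h1 : volterra c h 1 ≤ 0) :
    c ≤ M / 2 := by
  have : ∫ s in 0..1, (1 - s) * h s ≤ ∫ s in 0..1, (1 - s) * M :=
    integral_mono_on zero_le_one (Continuous.intervalIntegrable (by fun_prop) _ _)
      (Continuous.intervalIntegrable (by fun_prop) _ _) fun s hs =>
        mul_le_mul_of_nonneg_left (hhM s hs) (sub_nonneg.2 hs.2)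
  rw [volterra_one] at h1
  simp only [integral_mul_const, integral_sub_left_self] at this
  linarith

lemma volterra_le_volterra_one_add (hnn : ∀ s ∈ I, 0 ≤ h s) (h1 : 0 ≤ volterra c h 1) {t : ℝ}
    (ht : t ∈ I) : volterra c h t ≤ volterra c h 1 + ∫ s in 0..1, s * (1 - s) * h s := by
  have : ∫ s in 0..1, greenG t s * h s ≤ ∫ s in 0..1, s * (1 - s) * h s := by
    rw [← greenOn_one]
    exact integral_mono_on zero_le_one (Continuous.intervalIntegrable (by fun_prop) _ _)
      (Continuous.intervalIntegrable (by fun_prop) _ _) fun s hs =>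
        mul_le_mul_of_nonneg_right (greenOn_one ▸ greenG_le t hs) (hnn s hs)
  rw [volterra_eq_greenG hh (t := t) ht]
  nlinarith [ht.2]

lemma volterra_one_add_div_four_le (hnn : ∀ s ∈ I, 0 ≤ h s) (h1 : 0 ≤ volterra c h 1) {t : ℝ}
    (ht : t ∈ Icc (1 / 4 : ℝ) (3 / 4)) :
    (volterra c h 1 + ∫ s in 0..1, s * (1 - s) * h s) / 4 ≤ volterra c h t := by
  have : ∫ s in 0..1, s * (1 - s) * h s / 4 ≤ ∫ s in 0..1, greenG t s * h s := by
    rw [← greenOn_one]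
    refine integral_mono_on zero_le_one (Continuous.intervalIntegrable (by fun_prop) _ _)
      (Continuous.intervalIntegrable (by fun_prop) _ _) fun s hs => ?_
    rw [mul_div_right_comm]
    exact mul_le_mul_of_nonneg_right (greenOn_one ▸ le_greenG ht hs) (hnn s hs)
  rw [integral_div] at this
  rw [volterra_eq_greenG hh (t := t) ⟨by linarith [ht.1], by linarith [ht.2]⟩]
  nlinarith [ht.1]

lemma volterra_one_add_le_of_sq_le (hsq : ∀ s ∈ I, volterra c h s ^ 2 ≤ h s)
    (h1 : 0 ≤ volterra c h 1) : volterra c h 1 + ∫ s in 0..1, s * (1 - s) * h s ≤ 512 / 3 := by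
  have hnn : ∀ s ∈ I, 0 ≤ h s := fun s hs => (sq_nonneg _).trans (hsq s hs)
  set J := ∫ s in 0..1, s * (1 - s) * h s
  set R := volterra c h 1 + J
  have hJ0 : 0 ≤ J := integral_nonneg zero_le_one fun s hs =>
    mul_nonneg (mul_nonneg hs.1 (sub_nonneg.2 hs.2)) (hnn s hs)
  -- `v ≥ R / 4` on `[1/4, 3/4]`, so `J ≥ (1/2) (3/16) (R/4)² = 3 R² / 512`, whence `R ≤ 512 / 3`.
  have hmid : ∫ s in (1 / 4 : ℝ)..(3 / 4), 3 / 16 * (R / 4) ^ 2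
      ≤ ∫ s in (1 / 4 : ℝ)..(3 / 4), s * (1 - s) * h s := by
    refine integral_mono_on (by norm_num) (Continuous.intervalIntegrable (by fun_prop) _ _)
      (Continuous.intervalIntegrable (by fun_prop) _ _) fun s hs => ?_
    have hRv := volterra_one_add_div_four_le hh hnn h1 hs
    have hRh : (R / 4) ^ 2 ≤ h s :=
      (pow_le_pow_left₀ (by positivity) hRv 2).trans (hsq s ⟨by linarith [hs.1], by linarith [hs.2]⟩)
    have hss : 3 / 16 ≤ s * (1 - s) := by
      nlinarith [mul_nonneg (sub_nonneg.2 hs.1) (sub_nonneg.2 hs.2)]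
    exact mul_le_mul hss hRh (sq_nonneg _) (by linarith)
  have hsub : ∫ s in (1 / 4 : ℝ)..(3 / 4), s * (1 - s) * h s ≤ J := by
    refine integral_mono_interval (by norm_num) (by norm_num) (by norm_num) ?_
      (Continuous.intervalIntegrable (by fun_prop) _ _)
    refine (MeasureTheory.ae_restrict_iff' measurableSet_Ioc).2 (.of_forall fun s hs => ?_)
    exact mul_nonneg (mul_nonneg hs.1.le (sub_nonneg.2 hs.2)) (hnn s (Ioc_subset_Icc_self hs))
  simp only [integral_const, smul_eq_mul] at hmid
  nlinarith

lemma le_of_volterra_one_nonneg {q : ℝ → ℝ} {F : ℝ} (hq0 : ∀ s ∈ I, 0 ≤ q s)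
    (hqF : ∀ s ∈ I, q s ≤ F) (heq : ∀ s ∈ I, h s = volterra c h s ^ 2 + q s)
    (h1 : 0 ≤ volterra c h 1) : c ≤ 512 / 3 + (512 / 3) ^ 2 + F := by
  have hsq : ∀ s ∈ I, volterra c h s ^ 2 ≤ h s := fun s hs => by
    rw [heq s hs]; linarith [hq0 s hs]
  have hnn : ∀ s ∈ I, 0 ≤ h s := fun s hs => (sq_nonneg _).trans (hsq s hs)
  have hR := volterra_one_add_le_of_sq_le hh hsq h1
  have hJ0 : 0 ≤ ∫ s in 0..1, s * (1 - s) * h s := integral_nonneg zero_le_one fun s hs =>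
    mul_nonneg (mul_nonneg hs.1 (sub_nonneg.2 hs.2)) (hnn s hs)
  have hint : ∫ s in 0..1, (1 - s) * h s ≤ ∫ _ in (0 : ℝ)..1, ((512 / 3) ^ 2 + F) := by
    refine integral_mono_on zero_le_one (Continuous.intervalIntegrable (by fun_prop) _ _)
      (Continuous.intervalIntegrable (by fun_prop) _ _) fun s hs => ?_
    have hv0 := volterra_nonneg hh hnn h1 hs
    have hvR := volterra_le_volterra_one_add hh hnn h1 hs
    have : h s ≤ (512 / 3) ^ 2 + F := by rw [heq s hs]; nlinarith [hqF s hs]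
    nlinarith [hnn s hs, hs.1]
  rw [volterra_one] at h1 hR
  simp only [integral_const, smul_eq_mul, sub_zero, one_mul] at hint
  linarith

end VolterraBounds

lemma abs_volterra_sub_volterra_le {c : ℝ} {h h' : ℝ → ℝ} (hh : Continuous h)
    (hh' : Continuous h') {t : ℝ} (ht : t ∈ I) :
    |volterra c h t - volterra c h' t| ≤ ∫ s in 0..t, |h s - h' s| := by
  have hd : volterra c h t - volterra c h' t = ∫ s in 0..t, (t - s) * (h' s - h s) := by
    simp only [mul_sub]
    rw [integral_sub (Continuous.intervalIntegrable (by fun_prop) _ _)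
      (Continuous.intervalIntegrable (by fun_prop) _ _), volterra, volterra]
    ring
  rw [hd]
  refine (abs_integral_le_integral_abs ht.1).trans <| integral_mono_on ht.1
    (Continuous.intervalIntegrable (by fun_prop) _ _)
    (Continuous.intervalIntegrable (by fun_prop) _ _) fun s hs => ?_
  rw [abs_mul, abs_sub_comm (h' s)]
  exact mul_le_of_le_one_left (abs_nonneg _)
    (abs_le.2 ⟨by linarith [hs.2, ht.1], by linarith [hs.1, ht.2]⟩)

lemma dist_iterate_le_of_abs_sub_le {Φ : C(I, ℝ) → C(I, ℝ)} {K : ℝ} (hK : 0 ≤ K)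
    (hΦ : ∀ u v (D : ℝ) (k : ℕ), (∀ s : I, |u s - v s| ≤ D * (s : ℝ) ^ k / k !) →
      ∀ t : I, |Φ u t - Φ v t| ≤ K * D * (t : ℝ) ^ (k + 1) / (k + 1)!)
    (n : ℕ) (u v : C(I, ℝ)) : dist (Φ^[n] u) (Φ^[n] v) ≤ K ^ n / n ! * dist u v := by
  have hpt : ∀ n : ℕ, ∀ t : I,
      |Φ^[n] u t - Φ^[n] v t| ≤ K ^ n * dist u v * (t : ℝ) ^ n / n ! := by
    intro n
    induction n with
    | zero => simpa [← Real.dist_eq] using fun t : I => ContinuousMap.dist_apply_le_dist t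
    | succ n ih =>
      intro t
      rw [Function.iterate_succ_apply', Function.iterate_succ_apply', pow_succ', mul_assoc K]
      exact hΦ _ _ _ n ih t
  refine (ContinuousMap.dist_le (by positivity)).2 fun t => ?_
  rw [Real.dist_eq]
  refine (hpt n t).trans ?_
  rw [div_mul_eq_mul_div, mul_right_comm]
  gcongr
  exact mul_le_of_le_one_right (by positivity) (pow_le_one₀ t.2.1 t.2.2)

lemma dist_iterate_iterate_le {X : Type*} [PseudoMetricSpace X] {f g : X → X} {K : ℝ≥0}
    (hf : LipschitzWith K f) {C : ℝ} (hfg : ∀ x, dist (f x) (g x) ≤ C) (n : ℕ) (x : X) :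
    dist (f^[n] x) (g^[n] x) ≤ (K + 1) ^ n * C := by
  have hC : 0 ≤ C := dist_nonneg.trans (hfg x)
  induction n with
  | zero => simpa using hC
  | succ n ih =>
    rw [Function.iterate_succ_apply', Function.iterate_succ_apply']
    calc dist (f (f^[n] x)) (g (g^[n] x))
        ≤ dist (f (f^[n] x)) (f (g^[n] x)) + dist (f (g^[n] x)) (g (g^[n] x)) :=
          dist_triangle _ _ _
      _ ≤ K * ((K + 1) ^ n * C) + C := by
          gcongr
          exacts [(hf.dist_le_mul _ _).trans (by gcongr), hfg _]
      _ ≤ (K + 1) ^ (n + 1) * C := by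
          have : (1 : ℝ) ≤ (K + 1) ^ n := one_le_pow₀ (by simp)
          rw [pow_succ]; nlinarith [K.2]

section PositivePartNorm

variable {X : Type*} [TopologicalSpace X] [CompactSpace X]

lemma le_norm_sup_zero (u : C(X, ℝ)) (x : X) : u x ≤ ‖u ⊔ 0‖ :=
  (le_max_left _ _).trans <| (le_abs_self _).trans (by simpa using (u ⊔ 0).norm_coe_le_norm x)

lemma norm_sup_zero_le {u : C(X, ℝ)} {R : ℝ} (hR : 0 ≤ R) (hu : ∀ x, u x ≤ R) : ‖u ⊔ 0‖ ≤ R :=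
  ((u ⊔ 0).norm_le hR).2 fun x => by simpa [abs_of_nonneg] using ⟨hu x, hR⟩

lemma lipschitzWith_norm_sup_zero : LipschitzWith 1 fun u : C(X, ℝ) => ‖u ⊔ 0‖ := by
  refine LipschitzWith.of_dist_le_mul fun u v => ?_
  rw [NNReal.coe_one, one_mul, Real.dist_eq, dist_eq_norm]
  refine (abs_norm_sub_norm_le _ _).trans <| ((u ⊔ 0 - v ⊔ 0).norm_le (norm_nonneg _)).2 fun x => ?_
  simpa using (abs_max_sub_max_le_abs _ _ _).trans (dist_eq_norm u v ▸ Real.dist_eq _ _ ▸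
    ContinuousMap.dist_apply_le_dist x)

end PositivePartNorm

section Picard

variable (g q : C(ℝ, ℝ))

noncomputable def forcing (u : C(I, ℝ)) : C(ℝ, ℝ) := g.comp (u.IccExtend zero_le_one) + q

noncomputable def picardMap (c : ℝ) (u : C(I, ℝ)) : C(I, ℝ) :=
  ⟨fun t => volterra c (forcing g q u) t,
    (continuous_volterra (forcing g q u).continuous).comp continuous_subtype_val⟩

/-- Some fixed point of `picardMap g q c` (junk if there is none; there is exactly one when `g`
is Lipschitz). -/
noncomputable def picardSol (c : ℝ) : C(I, ℝ) :=
  Classical.epsilon (Function.IsFixedPt (picardMap g q c))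

/-- The solution of `-u'' = g u + q`, `u 0 = 0`, `u' 0 = c`, as a function on `ℝ`. -/
noncomputable def ivpSol (c : ℝ) : ℝ → ℝ := volterra c (forcing g q (picardSol g q c))

lemma forcing_apply_of_mem (u : C(I, ℝ)) {s : ℝ} (hs : s ∈ I) :
    forcing g q u s = g (u ⟨s, hs⟩) + q s := by
  simp [forcing, IccExtend_of_mem _ _ hs]

lemma dist_picardMap_picardMap_le (c c' : ℝ) (u : C(I, ℝ)) :
    dist (picardMap g q c u) (picardMap g q c' u) ≤ |c - c'| := by
  refine (ContinuousMap.dist_le (abs_nonneg _)).2 fun t => ?_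
  simp only [picardMap, ContinuousMap.coe_mk, volterra, Real.dist_eq, sub_sub_sub_cancel_right,
    ← sub_mul, abs_mul]
  exact mul_le_of_le_one_right (abs_nonneg _) (abs_le.2 ⟨by linarith [t.2.1], t.2.2⟩)

variable {g} {K : ℝ≥0} (hg : LipschitzWith K g)
include hg

lemma abs_picardMap_sub_le (c : ℝ) {u v : C(I, ℝ)} {D : ℝ} {k : ℕ}
    (huv : ∀ s : I, |u s - v s| ≤ D * (s : ℝ) ^ k / k !) (t : I) :
    |picardMap g q c u t - picardMap g q c v t| ≤ K * D * (t : ℝ) ^ (k + 1) / (k + 1)! := by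
  refine (abs_volterra_sub_volterra_le (forcing g q u).continuous (forcing g q v).continuous
    t.2).trans ?_
  calc ∫ s in 0..(t : ℝ), |forcing g q u s - forcing g q v s|
      ≤ ∫ s in 0..(t : ℝ), K * D / k ! * s ^ k := by
        refine integral_mono_on t.2.1 (Continuous.intervalIntegrable (by fun_prop) _ _)
          (Continuous.intervalIntegrable (by fun_prop) _ _) fun s hs => ?_
        have hs' : s ∈ I := ⟨hs.1, hs.2.trans t.2.2⟩
        rw [forcing_apply_of_mem g q u hs', forcing_apply_of_mem g q v hs',
          add_sub_add_right_eq_sub, ← Real.dist_eq]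
        refine (hg.dist_le_mul _ _).trans ?_
        rw [Real.dist_eq, mul_div_assoc, mul_assoc, div_mul_eq_mul_div]
        exact mul_le_mul_of_nonneg_left (huv ⟨s, hs'⟩) K.2
    _ = K * D * (t : ℝ) ^ (k + 1) / (k + 1)! := by
        rw [integral_const_mul, integral_pow, Nat.factorial_succ]
        push_cast
        field_simp
        ring

lemma dist_iterate_picardMap_le (c : ℝ) (n : ℕ) (u v : C(I, ℝ)) :
    dist ((picardMap g q c)^[n] u) ((picardMap g q c)^[n] v) ≤ K ^ n / n ! * dist u v :=
  dist_iterate_le_of_abs_sub_le K.2 (fun _ _ _ _ => abs_picardMap_sub_le q hg c) n u v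

lemma lipschitzWith_picardMap (c : ℝ) : LipschitzWith K (picardMap g q c) :=
  LipschitzWith.of_dist_le_mul fun u v => by simpa using dist_iterate_picardMap_le q hg c 1 u v

lemma exists_contractingWith_iterate_picardMap :
    ∃ n, ∀ c, ContractingWith (1 / 2) (picardMap g q c)^[n] := by
  obtain ⟨n, hn⟩ := ((FloorSemiring.tendsto_pow_div_factorial_atTop (K : ℝ)).eventually_le_const
    (by norm_num : (0 : ℝ) < 1 / 2)).exists
  refine ⟨n, fun c => ⟨by rw [← NNReal.coe_lt_coe]; norm_num, ?_⟩⟩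
  refine LipschitzWith.of_dist_le_mul fun u v => (dist_iterate_picardMap_le q hg c n u v).trans ?_
  push_cast
  exact mul_le_mul_of_nonneg_right hn dist_nonneg

lemma isFixedPt_picardSol (c : ℝ) : Function.IsFixedPt (picardMap g q c) (picardSol g q c) := by
  obtain ⟨n, hn⟩ := exists_contractingWith_iterate_picardMap q hg
  exact Classical.epsilon_spec ⟨_, (hn c).isFixedPt_fixedPoint_iterate⟩

lemma continuous_picardSol : Continuous (picardSol g q) := by
  obtain ⟨n, hn⟩ := exists_contractingWith_iterate_picardMap q hg
  refine (LipschitzWith.of_dist_le_mul (K := 2 * (K + 1) ^ n) fun c c' => ?_).continuous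
  have := (hn c).dist_fixedPoint_fixedPoint_of_dist_le' _ ((isFixedPt_picardSol q hg c).iterate n)
    ((isFixedPt_picardSol q hg c').iterate n) (dist_iterate_iterate_le
      (lipschitzWith_picardMap q hg c) (dist_picardMap_picardMap_le g q c c') n)
  rw [Real.dist_eq]
  norm_num at this ⊢
  linarith

lemma ivpSol_eq_picardSol (c : ℝ) (t : I) : ivpSol g q c t = picardSol g q c t := by
  conv_rhs => rw [← isFixedPt_picardSol q hg c]
  rfl

lemma ivpSol_le_norm_sup_zero (c : ℝ) {t : ℝ} (ht : t ∈ I) :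
    ivpSol g q c t ≤ ‖picardSol g q c ⊔ 0‖ := by
  rw [ivpSol_eq_picardSol q hg c ⟨t, ht⟩]
  exact le_norm_sup_zero _ _

lemma forcing_picardSol_apply (c : ℝ) {s : ℝ} (hs : s ∈ I) :
    forcing g q (picardSol g q c) s = g (ivpSol g q c s) + q s := by
  rw [forcing_apply_of_mem g q _ hs, ← ivpSol_eq_picardSol q hg c ⟨s, hs⟩]

lemma continuous_ivpSol_one : Continuous fun c => ivpSol g q c 1 := by
  simp_rw [ivpSol_eq_picardSol q hg _ ⟨1, unitInterval.one_mem⟩]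
  exact (continuous_eval_const _).comp (continuous_picardSol q hg)

end Picard

lemma exists_ne_ivpSol (g q : C(ℝ, ℝ)) {c c' : ℝ} (hcc' : c ≠ c') :
    ∃ t ∈ I, ivpSol g q c t ≠ ivpSol g q c' t := by
  by_contra! h
  exact hcc' (eq_of_eqOn_volterra (forcing g q _).continuous (forcing g q _).continuous h)

/-- The square nonlinearity, cut off outside `[0, κ]` to make it globally Lipschitz. -/
noncomputable def truncSq (κ : ℝ≥0) : C(ℝ, ℝ) := ⟨fun x => min (max x 0) κ ^ 2, by fun_prop⟩

lemma truncSq_nonneg (κ : ℝ≥0) (x : ℝ) : 0 ≤ truncSq κ x := sq_nonneg _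

lemma truncSq_le_sq {κ : ℝ≥0} {x r : ℝ} (hxr : x ≤ r) (hr : 0 ≤ r) : truncSq κ x ≤ r ^ 2 :=
  pow_le_pow_left₀ (le_min (le_max_right _ _) κ.2) ((min_le_left _ _).trans (max_le hxr hr)) 2

lemma truncSq_of_mem {κ : ℝ≥0} {x : ℝ} (hx : x ∈ Icc 0 (κ : ℝ)) : truncSq κ x = x ^ 2 := by
  simp [truncSq, max_eq_left hx.1, min_eq_left hx.2]

lemma lipschitzWith_truncSq (κ : ℝ≥0) : LipschitzWith (2 * κ) (truncSq κ) := by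
  have hcut : LipschitzWith 1 fun x : ℝ => min (max x 0) κ :=
    (LipschitzWith.id.max_const 0).min_const κ
  refine LipschitzWith.of_dist_le_mul fun x y => ?_
  set a := min (max x 0) (κ : ℝ)
  set b := min (max y 0) (κ : ℝ)
  have ha : a ∈ Icc 0 (κ : ℝ) := ⟨le_min (le_max_right _ _) κ.2, min_le_right _ _⟩
  have hb : b ∈ Icc 0 (κ : ℝ) := ⟨le_min (le_max_right _ _) κ.2, min_le_right _ _⟩
  have hab : |a - b| ≤ |x - y| := by simpa [← Real.dist_eq] using hcut.dist_le_mul x y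
  change |a ^ 2 - b ^ 2| ≤ 2 * κ * |x - y|
  rw [sq_sub_sq, abs_mul, abs_of_nonneg (add_nonneg ha.1 hb.1)]
  exact mul_le_mul (by linarith [ha.2, hb.2]) hab (abs_nonneg _) (by positivity)

lemma exists_two_zeros_of_nonpos_pos_nonpos {f : ℝ → ℝ} (hf : Continuous f) {a b c : ℝ}
    (hab : a ≤ b) (hbc : b ≤ c) (ha : f a ≤ 0) (hb : 0 < f b) (hc : f c ≤ 0) :
    ∃ x y, a ≤ x ∧ x < y ∧ y ≤ c ∧ f x = 0 ∧ f y = 0 := by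
  obtain ⟨x, hx, hfx⟩ := intermediate_value_Icc hab hf.continuousOn ⟨ha, hb.le⟩
  obtain ⟨y, hy, hfy⟩ := intermediate_value_Icc' hbc hf.continuousOn ⟨hc, hb.le⟩
  have hxb : x ≠ b := by rintro rfl; linarith
  have hyb : y ≠ b := by rintro rfl; linarith
  exact ⟨x, y, hx.1, (lt_of_le_of_ne hx.2 hxb).trans (lt_of_le_of_ne hy.1 hyb.symm), hy.2, hfx, hfy⟩

section Shooting

variable {κ : ℝ≥0} {q : C(ℝ, ℝ)}

lemma forcing_truncSq_le (c : ℝ) {s : ℝ} (hs : s ∈ I) :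
    forcing (truncSq κ) q (picardSol (truncSq κ) q c) s
      ≤ ‖picardSol (truncSq κ) q c ⊔ 0‖ ^ 2 + q s := by
  rw [forcing_picardSol_apply q (lipschitzWith_truncSq κ) c hs]
  have := truncSq_le_sq (κ := κ)
    (ivpSol_le_norm_sup_zero q (lipschitzWith_truncSq κ) c hs) (norm_nonneg _)
  linarith

variable (hq0 : ∀ s ∈ I, 0 ≤ q s)
include hq0

lemma forcing_truncSq_nonneg (u : C(I, ℝ)) {s : ℝ} (hs : s ∈ I) :
    0 ≤ forcing (truncSq κ) q u s := by
  rw [forcing_apply_of_mem _ _ u hs]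
  exact add_nonneg (truncSq_nonneg _ _) (hq0 s hs)

lemma ivpSol_le_mul (c : ℝ) {t : ℝ} (ht : t ∈ I) : ivpSol (truncSq κ) q c t ≤ c * t :=
  volterra_le_mul ht.1 fun _ hs => forcing_truncSq_nonneg hq0 _ ⟨hs.1, hs.2.trans ht.2⟩

lemma forcing_picardSol_eq_sq {c : ℝ} (hcκ : c ≤ κ) (h1 : 0 ≤ ivpSol (truncSq κ) q c 1) {s : ℝ}
    (hs : s ∈ I) :
    forcing (truncSq κ) q (picardSol (truncSq κ) q c) s = ivpSol (truncSq κ) q c s ^ 2 + q s := by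
  have hu0 : 0 ≤ ivpSol (truncSq κ) q c s :=
    volterra_nonneg (forcing _ q _).continuous (fun _ hs => forcing_truncSq_nonneg hq0 _ hs) h1 hs
  have huκ : ivpSol (truncSq κ) q c s ≤ κ := by
    nlinarith [ivpSol_le_mul (κ := κ) hq0 c hs, hs.1, hs.2]
  rw [forcing_picardSol_apply q (lipschitzWith_truncSq κ) c hs, truncSq_of_mem ⟨hu0, huκ⟩]

lemma isBVPSolution_ivpSol {f : ℝ → ℝ} (hqf : ∀ s ∈ I, q s = f s) {c : ℝ} (hcκ : c ≤ κ)
    (h1 : ivpSol (truncSq κ) q c 1 = 0) :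
    IsBVPSolution f (ivpSol (truncSq κ) q c) ∧ ∀ t ∈ I, 0 ≤ ivpSol (truncSq κ) q c t := by
  refine ⟨isBVPSolution_volterra (forcing _ q _).continuous (fun t ht => ?_) h1, fun t ht =>
    volterra_nonneg (forcing _ q _).continuous (fun _ hs => forcing_truncSq_nonneg hq0 _ hs)
      h1.ge ht⟩
  rw [forcing_picardSol_eq_sq hq0 hcκ h1.ge ht, hqf t ht]
  rfl

lemma ivpSol_one_neg {F c : ℝ} (hqF : ∀ s ∈ I, q s ≤ F) (hc : 512 / 3 + (512 / 3) ^ 2 + F < c)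
    (hcκ : c ≤ κ) : ivpSol (truncSq κ) q c 1 < 0 := by
  by_contra! h1
  exact hc.not_ge <| le_of_volterra_one_nonneg (forcing _ q _).continuous hq0 hqF
    (fun s hs => forcing_picardSol_eq_sq hq0 hcκ h1 hs) h1

lemma exists_ivpSol_one_pos {F μ : ℝ} (hqF : ∀ s ∈ I, q s ≤ F) (hμ0 : 0 ≤ μ) (hμ2 : μ < 2)
    (hμ : ∀ t ∈ I, ∫ s in 0..1, greenG t s * q s ≤ μ) :
    ∃ c ∈ Icc 0 (F + 9), 0 < ivpSol (truncSq κ) q c 1 := by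
  by_contra! hneg
  have hF : 0 ≤ F := (hq0 0 unitInterval.zero_mem).trans (hqF 0 unitInterval.zero_mem)
  set m := fun c => ‖picardSol (truncSq κ) q c ⊔ 0‖
  have hm : Continuous m :=
    lipschitzWith_norm_sup_zero.continuous.comp (continuous_picardSol q (lipschitzWith_truncSq κ))
  have hquad : ∀ c ∈ Icc 0 (F + 9), m c ≤ m c ^ 2 / 8 + μ := fun c hc =>
    norm_sup_zero_le (by positivity) fun t => by
      rw [← ivpSol_eq_picardSol q (lipschitzWith_truncSq κ)]
      exact volterra_le_div_two_of_volterra_one_nonpos (forcing _ q _).continuous q.continuous hq0 hμ0 hμ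
        (fun s hs => forcing_truncSq_le c hs) (hneg c hc) t.2
  have hm0 : m 0 ≤ 4 := norm_sup_zero_le (by norm_num) fun t => by
    rw [← ivpSol_eq_picardSol q (lipschitzWith_truncSq κ)]
    linarith [ivpSol_le_mul (κ := κ) hq0 0 t.2]
  have hmF : 4 < m (F + 9) := by
    have := le_div_two_of_volterra_one_nonpos (forcing _ q _).continuous (M := m (F + 9) ^ 2 + F)
      (fun s hs => (forcing_truncSq_le (F + 9) hs).trans (by linarith [hqF s hs]))
      (hneg (F + 9) ⟨by linarith, le_rfl⟩)
    nlinarith [norm_nonneg (picardSol (truncSq κ) q (F + 9) ⊔ 0)]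
  obtain ⟨c, hc, hmc⟩ := intermediate_value_Icc (by linarith) hm.continuousOn ⟨hm0, hmF.le⟩
  have := hquad c hc
  rw [hmc] at this
  linarith

end Shooting

lemma exists_two_nonneg_isBVPSolution {f : ℝ → ℝ} {q : C(ℝ, ℝ)} (hqf : ∀ s ∈ I, q s = f s)
    (hq0 : ∀ s ∈ I, 0 ≤ q s) {F μ : ℝ} (hqF : ∀ s ∈ I, q s ≤ F) (hμ0 : 0 ≤ μ) (hμ2 : μ < 2)
    (hμ : ∀ t ∈ I, ∫ s in 0..1, greenG t s * q s ≤ μ) :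
    ∃ u v : ℝ → ℝ, IsBVPSolution f u ∧ IsBVPSolution f v ∧
      (∀ t ∈ I, 0 ≤ u t) ∧ (∀ t ∈ I, 0 ≤ v t) ∧ ∃ t ∈ I, u t ≠ v t := by
  set κ : ℝ≥0 := ⟨F + 30000, by linarith [hq0 0 unitInterval.zero_mem, hqF 0 unitInterval.zero_mem]⟩
  have hκ : (κ : ℝ) = F + 30000 := rfl
  obtain ⟨c, hc, hpos⟩ := exists_ivpSol_one_pos (κ := κ) hq0 hqF hμ0 hμ2 hμ
  obtain ⟨c₁, c₂, -, h12, hc₂, h1, h2⟩ := exists_two_zeros_of_nonpos_pos_nonpos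
    (continuous_ivpSol_one q (lipschitzWith_truncSq κ)) hc.1 (hc.2.trans (by rw [hκ]; linarith))
    ((ivpSol_le_mul hq0 0 unitInterval.one_mem).trans_eq (zero_mul _)) hpos
    (ivpSol_one_neg hq0 hqF (by rw [hκ]; linarith) le_rfl).le
  obtain ⟨hsol₁, hnn₁⟩ := isBVPSolution_ivpSol hq0 hqf (h12.le.trans hc₂) h1
  obtain ⟨hsol₂, hnn₂⟩ := isBVPSolution_ivpSol hq0 hqf hc₂ h2
  exact ⟨_, _, hsol₁, hsol₂, hnn₁, hnn₂, exists_ne_ivpSol _ q h12.ne⟩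

lemma abs_integral_greenG_mul_le {f : ℝ → ℝ} {F : ℝ} (hfF : ∀ s ∈ I, |f s| ≤ F) {t : ℝ}
    (ht : t ∈ I) : |∫ s in 0..1, greenG t s * f s| ≤ F := by
  have := norm_integral_le_of_norm_le_const (a := 0) (b := 1) (C := F)
    (f := fun s => greenG t s * f s) fun s hs => ?_
  · simpa using this
  rw [uIoc_of_le zero_le_one] at hs
  have hs' := Ioc_subset_Icc_self hs
  have hG0 : 0 ≤ greenG t s := greenOn_one ▸ greenOn_nonneg ht hs'
  have hG1 : greenG t s ≤ 1 := (greenG_le t hs').trans (by nlinarith [hs'.1, hs'.2])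
  rw [Real.norm_eq_abs, abs_mul, abs_of_nonneg hG0]
  exact (mul_le_of_le_one_left (abs_nonneg _) hG1).trans (hfF s hs')

theorem bvp_two_nonnegative_solutions_general (f : ℝ → ℝ)
    (hf : ContinuousOn f (Icc 0 1)) (hfnn : ∀ t ∈ Icc (0 : ℝ) 1, 0 ≤ f t)
    (u₀ : ℝ → ℝ) (hu₀ : ∀ t, u₀ t = ∫ s in (0 : ℝ)..1, greenG t s * f s)
    (hsmall : 4 * (1 / 8 : ℝ) * sSup ((fun t => |u₀ t|) '' Icc 0 1) < 1) :
    ∃ u v : ℝ → ℝ,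
      IsBVPSolution f u ∧ IsBVPSolution f v ∧
      (∀ t ∈ Icc (0 : ℝ) 1, 0 ≤ u t) ∧ (∀ t ∈ Icc (0 : ℝ) 1, 0 ≤ v t) ∧
      ∃ t ∈ Icc (0 : ℝ) 1, u t ≠ v t := by
  set q : C(ℝ, ℝ) := ContinuousMap.IccExtend zero_le_one ⟨(Icc (0 : ℝ) 1).domRestrict f, hf.domRestrict⟩
  have hqf : ∀ s ∈ I, q s = f s := fun s hs => by simp [q, IccExtend_of_mem _ _ hs]
  obtain ⟨F, hF⟩ := isCompact_Icc.bddAbove_image hf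
  have hbdd : BddAbove ((fun t => |u₀ t|) '' I) :=
    ⟨F, forall_mem_image.2 fun t ht => hu₀ t ▸ abs_integral_greenG_mul_le (fun s hs => by
      rw [abs_of_nonneg (hfnn s hs)]; exact hF (mem_image_of_mem f hs)) ht⟩
  refine exists_two_nonneg_isBVPSolution hqf (fun s hs => hqf s hs ▸ hfnn s hs)
    (fun s hs => hqf s hs ▸ hF (mem_image_of_mem f hs))
    ((abs_nonneg _).trans (le_csSup hbdd (mem_image_of_mem _ unitInterval.zero_mem)))
    (by linarith) fun t ht => ?_
  calc ∫ s in 0..1, greenG t s * q s = u₀ t := by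
        rw [hu₀]
        exact integral_congr fun s hs => by
          rw [uIcc_of_le zero_le_one] at hs
          simp only [hqf s hs]
    _ ≤ sSup ((fun t => |u₀ t|) '' I) := (le_abs_self _).trans (le_csSup hbdd (mem_image_of_mem _ ht))

/-- Example 1 of the paper: for continuous `f ≥ 0`, not identically zero, if
`u₀(t) = ∫₀¹ G(t,s)f(s) ds` satisfies the smallness condition `4·B·‖u₀‖_∞ < 1` with
`B = 1/8`, then the BVP `−u″ = u² + f`, `u(0) = u(1) = 0` has at least two distinct
nonnegative `C²` solutions. -/
theorem bvp_two_nonnegative_solutions (f : ℝ → ℝ)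
    (hf : ContinuousOn f (Icc 0 1)) (hfnn : ∀ t ∈ Icc (0 : ℝ) 1, 0 ≤ f t)
    (hfne : ∃ t ∈ Icc (0 : ℝ) 1, f t ≠ 0)
    (u₀ : ℝ → ℝ) (hu₀ : ∀ t, u₀ t = ∫ s in (0 : ℝ)..1, greenG t s * f s)
    (hsmall : 4 * (1 / 8 : ℝ) * sSup ((fun t => |u₀ t|) '' Icc 0 1) < 1) :
    ∃ u v : ℝ → ℝ,
      IsBVPSolution f u ∧ IsBVPSolution f v ∧
      (∀ t ∈ Icc (0 : ℝ) 1, 0 ≤ u t) ∧ (∀ t ∈ Icc (0 : ℝ) 1, 0 ≤ v t) ∧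
      ∃ t ∈ Icc (0 : ℝ) 1, u t ≠ v t :=
  bvp_two_nonnegative_solutions_general f hf hfnn u₀ hu₀ hsmall
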